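/- With h_{s,z} := T_{ψ,z}(e_s) as above (T_{ψ,z} an interpolation operator of norm c for p = 2), define F_{s,z}(w) := ψ(z,s) · h_{s,z}(w)² for w ∈ M'. Then each F_{s,z} ∈ H_{1,ψ}(M') and for every w ∈ M' one has Σ_{s∈S} (|F_{s,z}(w)|/ψ(z,s)) · ψ(w) ≤ c². -/

import Mathlib

open Set
open scoped Manifold Topology ENNReal NNReal Classical

noncomputable section

/-- The weighted `ℓ^p` norm of `g` on the fibre `r ⁻¹' {x}` of a covering `r : N' → N`
(the norm of the space `l_{p,ψ,x}`). -/
def fibLpNorm {N N' : Type*} (r : N' → N) (ψ : N' → ℝ) (p : ℝ≥0∞) (x : N)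
    (g : N' → ℂ) : ℝ :=
  if p = ∞ then ⨆ y : r ⁻¹' {x}, ‖g ↑y‖ * ψ ↑y
  else (∑' y : r ⁻¹' {x}, ‖g ↑y‖ ^ p.toReal * ψ ↑y) ^ (1 / p.toReal)

/-- Membership in the space `l_{p,ψ,x}` of the fibre over `x`. -/
def MemFibLp {N N' : Type*} (r : N' → N) (ψ : N' → ℝ) (p : ℝ≥0∞) (x : N)
    (g : N' → ℂ) : Prop :=
  if p = ∞ then BddAbove (range fun y : r ⁻¹' {x} => ‖g ↑y‖ * ψ ↑y)
  else Summable fun y : r ⁻¹' {x} => ‖g ↑y‖ ^ p.toReal * ψ ↑y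

/-- The norm of the space `H_{p,ψ}(M')`: the sup over `x ∈ M` of the weighted `ℓ^p`
norms over the fibres `r ⁻¹' {x}`. -/
def covHpNorm {N N' : Type*} (r : N' → N) (ψ : N' → ℝ) (p : ℝ≥0∞) (M : Set N)
    (g : N' → ℂ) : ℝ :=
  ⨆ x : M, fibLpNorm r ψ p ↑x g

/-- Membership in the space `H_{p,ψ}(M')` : `g` is holomorphic on `M' := r ⁻¹' M`,
its restriction to every fibre lies in `l_{p,ψ,x}`, and its `H_{p,ψ}` norm is finite. -/
def MemCovHp (H : Type*) [NormedAddCommGroup H] [NormedSpace ℂ H]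
    {N N' : Type*} [TopologicalSpace N] [ChartedSpace H N]
    [TopologicalSpace N'] [ChartedSpace H N']
    (r : N' → N) (ψ : N' → ℝ) (p : ℝ≥0∞) (M : Set N) (g : N' → ℂ) : Prop :=
  MDifferentiableOn 𝓘(ℂ, H) 𝓘(ℂ, ℂ) g (r ⁻¹' M) ∧
  (∀ x ∈ M, MemFibLp r ψ p x g) ∧
  BddAbove (range fun x : M => fibLpNorm r ψ p ↑x g)

/-- A relatively compact domain `M ⊂⊂ N` with smooth boundary which is strongly
pseudoconvex: `M = {ρ < 0}` for a `C²` function `ρ` defined near `closure M` with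
`dρ ≠ 0` on the boundary, whose Levi form is positive on the complex tangent space
of the boundary.  (In a chart, the Levi form applied to `w` equals
`(1/4)(Hess ρ (w,w) + Hess ρ (i•w, i•w))`, and the complex tangency of `w` means
`dρ(w) = dρ(i•w) = 0`.) -/
def IsStronglyPseudoconvexDomain (H : Type*) [NormedAddCommGroup H] [NormedSpace ℂ H]
    {N : Type*} [TopologicalSpace N] [ChartedSpace H N] (M : Set N) : Prop :=
  IsOpen M ∧ IsConnected M ∧ IsCompact (closure M) ∧
  ∃ (Ω : Set N) (ρ : N → ℝ), IsOpen Ω ∧ closure M ⊆ Ω ∧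
    M = {z ∈ Ω | ρ z < 0} ∧
    (∀ z ∈ Ω, ContDiffAt ℝ 2 (fun u => ρ ((chartAt H z).symm u)) (chartAt H z z)) ∧
    (∀ z ∈ frontier M, fderiv ℝ (fun u => ρ ((chartAt H z).symm u)) (chartAt H z z) ≠ 0) ∧
    (∀ z ∈ frontier M, ∀ w : H, w ≠ 0 →
      fderiv ℝ (fun u => ρ ((chartAt H z).symm u)) (chartAt H z z) w = 0 →
      fderiv ℝ (fun u => ρ ((chartAt H z).symm u)) (chartAt H z z) ((Complex.I : ℂ) • w) = 0 →
      0 < fderiv ℝ (fun u => fderiv ℝ (fun v => ρ ((chartAt H z).symm v)) u w)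
            (chartAt H z z) w +
          fderiv ℝ (fun u => fderiv ℝ (fun v => ρ ((chartAt H z).symm v)) u
            ((Complex.I : ℂ) • w)) (chartAt H z z) ((Complex.I : ℂ) • w))

/-- An open subset which is a Stein manifold: it is holomorphically separable and
holomorphically convex (every compact subset has compact holomorphically convex hull). -/
def IsSteinOpen (H : Type*) [NormedAddCommGroup H] [NormedSpace ℂ H]
    {N : Type*} [TopologicalSpace N] [ChartedSpace H N] (Ω : Set N) : Prop :=
  IsOpen Ω ∧
  (∀ x ∈ Ω, ∀ y ∈ Ω, x ≠ y →
    ∃ f : N → ℂ, MDifferentiableOn 𝓘(ℂ, H) 𝓘(ℂ, ℂ) f Ω ∧ f x ≠ f y) ∧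
  (∀ K : Set N, K ⊆ Ω → IsCompact K →
    IsCompact {x ∈ Ω | ∀ f : N → ℂ, MDifferentiableOn 𝓘(ℂ, H) 𝓘(ℂ, ℂ) f Ω →
      ‖f x‖ ≤ ⨆ y : K, ‖f ↑y‖})

/-- A holomorphically convex open subset: the holomorphically convex hull (with respect
to functions holomorphic on `V`) of every compact subset of `V` is compact. -/
def IsHolomorphicallyConvexOpen (H : Type*) [NormedAddCommGroup H] [NormedSpace ℂ H]
    {N : Type*} [TopologicalSpace N] [ChartedSpace H N] (V : Set N) : Prop :=
  IsOpen V ∧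
  (∀ K : Set N, K ⊆ V → IsCompact K →
    IsCompact {x ∈ V | ∀ f : N → ℂ, MDifferentiableOn 𝓘(ℂ, H) 𝓘(ℂ, ℂ) f V →
      ‖f x‖ ≤ ⨆ y : K, ‖f ↑y‖})

/-- A compact subset which is holomorphically convex in `M`: it coincides with its
holomorphically convex hull with respect to functions holomorphic on `M`. -/
def IsHolConvexCompactIn (H : Type*) [NormedAddCommGroup H] [NormedSpace ℂ H]
    {N : Type*} [TopologicalSpace N] [ChartedSpace H N] (M K : Set N) : Prop :=
  IsCompact K ∧ K ⊆ M ∧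
  {x ∈ M | ∀ f : N → ℂ, MDifferentiableOn 𝓘(ℂ, H) 𝓘(ℂ, ℂ) f M →
    ‖f x‖ ≤ ⨆ y : K, ‖f ↑y‖} ⊆ K

/-- A compact complex subvariety of `M` of complex dimension `≥ 1`: a nonempty compact
subset of `M`, without isolated points (which for analytic sets is equivalent to having
positive dimension at each point), which is locally the common zero set of a family of
holomorphic functions. -/
def IsCompactPosDimSubvariety (H : Type*) [NormedAddCommGroup H] [NormedSpace ℂ H]
    {N : Type*} [TopologicalSpace N] [ChartedSpace H N] (M A : Set N) : Prop :=
  A.Nonempty ∧ A ⊆ M ∧ IsCompact A ∧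
  (∀ x ∈ A, x ∈ closure (A \ {x})) ∧
  (∀ x ∈ A, ∃ U : Set N, IsOpen U ∧ x ∈ U ∧
    ∃ F : Set (N → ℂ), (∀ f ∈ F, MDifferentiableOn 𝓘(ℂ, H) 𝓘(ℂ, ℂ) f U) ∧
      A ∩ U = {y ∈ U | ∀ f ∈ F, f y = 0})

/-- `C_M`: the union of all compact complex subvarieties of `M` of complex
dimension `≥ 1`. -/
def varietyUnion (H : Type*) [NormedAddCommGroup H] [NormedSpace ℂ H]
    {N : Type*} [TopologicalSpace N] [ChartedSpace H N] (M : Set N) : Set N :=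
  ⋃₀ {A : Set N | IsCompactPosDimSubvariety H M A}

/-- The inclusion `M ↪ N` induces an isomorphism of fundamental groups
(`π₁(M) = π₁(N)`): every loop in `N` based at a point of `M` is homotopic to a loop in
`M`, and loops in `M` which are homotopic in `N` are homotopic in `M`. -/
def InducesPi1Iso {N : Type*} [TopologicalSpace N] (M : Set N) : Prop :=
  ∀ x₀ : M,
    (∀ γ : Path (x₀ : N) (x₀ : N),
      ∃ δ : Path x₀ x₀, Path.Homotopic γ (δ.map continuous_subtype_val)) ∧
    (∀ δ δ' : Path x₀ x₀,
      Path.Homotopic (δ.map continuous_subtype_val) (δ'.map continuous_subtype_val) →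
      Path.Homotopic δ δ')

/-- A closed complex submanifold `Y` of an open set `V`: `Y ⊆ V` is closed in `V` and
is locally the zero set of a holomorphic submersion into some `ℂ^k`. -/
def IsClosedComplexSubmanifoldIn (H : Type*) [NormedAddCommGroup H] [NormedSpace ℂ H]
    {N : Type*} [TopologicalSpace N] [ChartedSpace H N] (V Y : Set N) : Prop :=
  Y ⊆ V ∧ closure Y ∩ V ⊆ Y ∧
  ∀ y ∈ Y, ∃ (k : ℕ) (U : Set N) (f : N → (Fin k → ℂ)),
    IsOpen U ∧ y ∈ U ∧ U ⊆ V ∧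
    MDifferentiableOn 𝓘(ℂ, H) 𝓘(ℂ, Fin k → ℂ) f U ∧
    Y ∩ U = {x ∈ U | f x = 0} ∧
    ∀ x ∈ Y ∩ U, Function.Surjective (mfderiv 𝓘(ℂ, H) 𝓘(ℂ, Fin k → ℂ) f x)

/-! For `w ∈ M'` put `u_s := h_{s,z}(w)`. Since `Σ a_s u_s = (T_{ψ,z} Σ a_s e_s)(w)` and the `e_s`
are orthonormal, `|Σ a_s u_s|² ψ(w) ≤ c² Σ |a_s|²` for every finitely supported `a`; testing this
against `a_s := conj u_s` gives the Bessel-type bound `Σ |u_s|² ψ(w) ≤ c²`, and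
`|F_{s,z}(w)| / ψ(z,s) = |u_s|²`. Membership `F_{s,z} ∈ H_{1,ψ}(M')` holds because squaring turns
the weighted `ℓ²` norm over a fibre into a weighted `ℓ¹` norm. -/

theorem sum_norm_sq_le_of_norm_sum_mul_sq_le {𝕜 ι : Type*} [RCLike 𝕜]
    (A : Finset ι) (u : ι → 𝕜) {K : ℝ} (hK₀ : 0 ≤ K)
    (hK : ∀ a : ι → 𝕜, ‖∑ s ∈ A, a s * u s‖ ^ 2 ≤ K * ∑ s ∈ A, ‖a s‖ ^ 2) :
    ∑ s ∈ A, ‖u s‖ ^ 2 ≤ K := by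
  set S := ∑ s ∈ A, ‖u s‖ ^ 2 with hS_def
  have hS₀ : 0 ≤ S := Finset.sum_nonneg fun s _ => by positivity
  have hdual : ∑ s ∈ A, starRingEnd 𝕜 (u s) * u s = (S : 𝕜) := by
    push_cast [hS_def]
    exact Finset.sum_congr rfl fun s _ => by rw [mul_comm, RCLike.mul_conj]
  have hS : S ^ 2 ≤ K * S := by
    have := hK fun s => starRingEnd 𝕜 (u s)
    simpa only [hdual, RCLike.norm_ofReal, abs_of_nonneg hS₀, RCLike.norm_conj] using this
  rcases hS₀.eq_or_lt with hS_zero | hS_pos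
  · exact hS_zero ▸ hK₀
  · nlinarith

section Fibre

variable {N N' : Type*} (r : N' → N) {ψ : N' → ℝ}

theorem fibLpNorm_nonneg (hψ : ∀ y, 0 ≤ ψ y) (p : ℝ≥0∞) (x : N) (g : N' → ℂ) :
    0 ≤ fibLpNorm r ψ p x g := by
  unfold fibLpNorm
  split_ifs
  · exact Real.iSup_nonneg fun y => mul_nonneg (norm_nonneg _) (hψ y)
  · exact Real.rpow_nonneg (tsum_nonneg fun y => mul_nonneg (by positivity) (hψ _)) _

theorem memFibLp_two_iff (x : N) (g : N' → ℂ) :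
    MemFibLp r ψ 2 x g ↔ Summable fun y : r ⁻¹' {x} => ‖g y‖ ^ 2 * ψ y := by
  simp [MemFibLp]

theorem memFibLp_one_iff (x : N) (g : N' → ℂ) :
    MemFibLp r ψ 1 x g ↔ Summable fun y : r ⁻¹' {x} => ‖g y‖ * ψ y := by
  simp [MemFibLp]

theorem fibLpNorm_one (x : N) (g : N' → ℂ) :
    fibLpNorm r ψ 1 x g = ∑' y : r ⁻¹' {x}, ‖g y‖ * ψ y := by
  simp [fibLpNorm]

theorem fibLpNorm_two_sq (hψ : ∀ y, 0 ≤ ψ y) (x : N) (g : N' → ℂ) :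
    fibLpNorm r ψ 2 x g ^ 2 = ∑' y : r ⁻¹' {x}, ‖g y‖ ^ 2 * ψ y := by
  have h₀ : 0 ≤ ∑' y : r ⁻¹' {x}, ‖g y‖ ^ 2 * ψ y :=
    tsum_nonneg fun y => mul_nonneg (by positivity) (hψ y)
  simp only [fibLpNorm, ENNReal.ofNat_ne_top, if_false, ENNReal.toReal_ofNat, Real.rpow_two]
  rw [← Real.rpow_natCast, ← Real.rpow_mul h₀]
  norm_num

theorem norm_sq_mul_le_fibLpNorm_sq (hψ : ∀ y, 0 ≤ ψ y) {g : N' → ℂ} {w : N'}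
    (hg : MemFibLp r ψ 2 (r w) g) : ‖g w‖ ^ 2 * ψ w ≤ fibLpNorm r ψ 2 (r w) g ^ 2 := by
  rw [fibLpNorm_two_sq r hψ]
  exact ((memFibLp_two_iff r _ g).1 hg).le_tsum (⟨w, rfl⟩ : r ⁻¹' {r w})
    fun y _ => mul_nonneg (by positivity) (hψ y)

theorem fibLpNorm_one_const_mul_sq (hψ : ∀ y, 0 ≤ ψ y) (a : ℂ) (x : N) (g : N' → ℂ) :
    fibLpNorm r ψ 1 x (fun w => a * g w ^ 2) = ‖a‖ * fibLpNorm r ψ 2 x g ^ 2 := by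
  rw [fibLpNorm_one, fibLpNorm_two_sq r hψ, ← tsum_mul_left]
  exact tsum_congr fun y => by rw [norm_mul, norm_pow, mul_assoc]

theorem memFibLp_one_const_mul_sq (a : ℂ) {x : N} {g : N' → ℂ} (hg : MemFibLp r ψ 2 x g) :
    MemFibLp r ψ 1 x (fun w => a * g w ^ 2) := by
  rw [memFibLp_one_iff]
  simpa only [norm_mul, norm_pow, mul_assoc] using ((memFibLp_two_iff r x g).1 hg).mul_left ‖a‖

end Fibre

section CovHp

variable {H : Type*} [NormedAddCommGroup H] [NormedSpace ℂ H]
  {N N' : Type*} [TopologicalSpace N] [ChartedSpace H N] [TopologicalSpace N'] [ChartedSpace H N']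
  {r : N' → N} {ψ : N' → ℝ} {p : ℝ≥0∞} {M : Set N} {g : N' → ℂ}

theorem MemCovHp.fibLpNorm_le_covHpNorm (hg : MemCovHp H r ψ p M g) {x : N} (hx : x ∈ M) :
    fibLpNorm r ψ p x g ≤ covHpNorm r ψ p M g :=
  le_ciSup hg.2.2 ⟨x, hx⟩

theorem MemCovHp.norm_sq_mul_le_covHpNorm_sq (hψ : ∀ y, 0 ≤ ψ y) (hg : MemCovHp H r ψ 2 M g)
    {w : N'} (hw : r w ∈ M) : ‖g w‖ ^ 2 * ψ w ≤ covHpNorm r ψ 2 M g ^ 2 :=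
  (norm_sq_mul_le_fibLpNorm_sq r hψ (hg.2.1 _ hw)).trans <|
    pow_le_pow_left₀ (fibLpNorm_nonneg r hψ _ _ _) (hg.fibLpNorm_le_covHpNorm hw) 2

theorem MemCovHp.const_mul_sq (hψ : ∀ y, 0 ≤ ψ y) (hg : MemCovHp H r ψ 2 M g) (a : ℂ) :
    MemCovHp H r ψ 1 M (fun w => a * g w ^ 2) := by
  obtain ⟨hholo, hfib, B, hB⟩ := hg
  refine ⟨mdifferentiableOn_const.mul (hholo.pow 2),
    fun x hx => memFibLp_one_const_mul_sq r a (hfib x hx), ‖a‖ * B ^ 2, ?_⟩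
  rintro _ ⟨x, rfl⟩
  dsimp only
  rw [fibLpNorm_one_const_mul_sq r hψ]
  gcongr
  · exact fibLpNorm_nonneg r hψ _ _ _
  · exact hB ⟨x, rfl⟩

end CovHp

/-- The basis vector `e_s` of `l_{2,ψ,z}(M')`, for `s` in the fibre over `z`. -/
def weightedDelta {N' : Type*} (ψ : N' → ℝ) (s : N') : N' → ℂ :=
  fun y => if y = s then ((ψ s ^ (-(1/2) : ℝ) : ℝ) : ℂ) else 0

section WeightedDelta

variable {N N' : Type*} {r : N' → N} {ψ : N' → ℝ}

theorem sum_smul_weightedDelta_apply {S : Set N'} (A : Finset S) (a : S → ℂ) (y : S) :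
    (∑ s ∈ A, a s • weightedDelta ψ s) y =
      if y ∈ A then a y * ((ψ y ^ (-(1/2) : ℝ) : ℝ) : ℂ) else 0 := by
  simp only [Finset.sum_apply, Pi.smul_apply, smul_eq_mul, weightedDelta, Subtype.coe_inj,
    mul_ite, mul_zero]
  exact Finset.sum_ite_eq A y _

theorem norm_mul_rpow_neg_half_sq_mul {t : ℝ} (ht : 0 < t) (a : ℂ) :
    ‖a * ((t ^ (-(1/2) : ℝ) : ℝ) : ℂ)‖ ^ 2 * t = ‖a‖ ^ 2 := by
  have hsq : (t ^ (-(1/2) : ℝ)) ^ 2 * t = 1 := by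
    rw [← Real.rpow_natCast, ← Real.rpow_mul ht.le, ← Real.rpow_add_one ht.ne']
    norm_num
  rw [norm_mul, Complex.norm_real, Real.norm_of_nonneg (by positivity), mul_pow, mul_assoc, hsq,
    mul_one]

variable {z : N} (A : Finset (r ⁻¹' {z})) (a : r ⁻¹' {z} → ℂ)

theorem norm_sum_smul_weightedDelta_sq_mul (hψ : ∀ y, 0 < ψ y) (y : r ⁻¹' {z}) :
    ‖(∑ s ∈ A, a s • weightedDelta ψ s) y‖ ^ 2 * ψ y = if y ∈ A then ‖a y‖ ^ 2 else 0 := by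
  rw [sum_smul_weightedDelta_apply]
  split_ifs
  · exact norm_mul_rpow_neg_half_sq_mul (hψ y) _
  · simp

theorem memFibLp_two_sum_smul_weightedDelta (hψ : ∀ y, 0 < ψ y) :
    MemFibLp r ψ 2 z (∑ s ∈ A, a s • weightedDelta ψ s) := by
  rw [memFibLp_two_iff]
  refine summable_of_ne_finset_zero (s := A) fun y hy => ?_
  rw [norm_sum_smul_weightedDelta_sq_mul A a hψ, if_neg hy]

theorem fibLpNorm_two_sum_smul_weightedDelta_sq (hψ : ∀ y, 0 < ψ y) :
    fibLpNorm r ψ 2 z (∑ s ∈ A, a s • weightedDelta ψ s) ^ 2 = ∑ s ∈ A, ‖a s‖ ^ 2 := by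
  rw [fibLpNorm_two_sq r fun y => (hψ y).le,
    tsum_eq_sum (s := A) fun y hy => by rw [norm_sum_smul_weightedDelta_sq_mul A a hψ, if_neg hy]]
  exact Finset.sum_congr rfl fun s hs => by
    rw [norm_sum_smul_weightedDelta_sq_mul A a hψ, if_pos hs]

theorem memFibLp_two_weightedDelta (hψ : ∀ y, 0 < ψ y) (s : r ⁻¹' {z}) :
    MemFibLp r ψ 2 z (weightedDelta ψ s) := by
  simpa using memFibLp_two_sum_smul_weightedDelta {s} 1 hψ

end WeightedDelta

section Interpolation

variable {H : Type*} [NormedAddCommGroup H] [NormedSpace ℂ H]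
  {N N' : Type*} [TopologicalSpace N] [ChartedSpace H N] [TopologicalSpace N'] [ChartedSpace H N']
  {r : N' → N} {ψ : N' → ℝ} {M : Set N} {z : N} {T : (N' → ℂ) →ₗ[ℂ] (N' → ℂ)} {c : ℝ}

theorem norm_sum_mul_apply_weightedDelta_sq_le (hψ : ∀ y, 0 < ψ y)
    (hT : ∀ h, MemFibLp r ψ 2 z h →
      MemCovHp H r ψ 2 M (T h) ∧ covHpNorm r ψ 2 M (T h) ≤ c * fibLpNorm r ψ 2 z h)
    {w : N'} (hw : r w ∈ M) (A : Finset (r ⁻¹' {z})) (a : r ⁻¹' {z} → ℂ) :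
    ‖∑ s ∈ A, a s * T (weightedDelta ψ s) w‖ ^ 2 * ψ w ≤ c ^ 2 * ∑ s ∈ A, ‖a s‖ ^ 2 := by
  set g := ∑ s ∈ A, a s • weightedDelta ψ s
  obtain ⟨hTg, hTg_le⟩ := hT g (memFibLp_two_sum_smul_weightedDelta A a hψ)
  have hTg_apply : T g w = ∑ s ∈ A, a s * T (weightedDelta ψ s) w := by
    simp only [g, map_sum, map_smul, Finset.sum_apply, Pi.smul_apply, smul_eq_mul]
  calc ‖∑ s ∈ A, a s * T (weightedDelta ψ s) w‖ ^ 2 * ψ w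
      ≤ covHpNorm r ψ 2 M (T g) ^ 2 :=
        hTg_apply ▸ hTg.norm_sq_mul_le_covHpNorm_sq (fun y => (hψ y).le) hw
    _ ≤ (c * fibLpNorm r ψ 2 z g) ^ 2 :=
        pow_le_pow_left₀ ((fibLpNorm_nonneg r (fun y => (hψ y).le) _ _ _).trans
          (hTg.fibLpNorm_le_covHpNorm hw)) hTg_le 2
    _ = c ^ 2 * ∑ s ∈ A, ‖a s‖ ^ 2 := by
      rw [mul_pow, fibLpNorm_two_sum_smul_weightedDelta_sq A a hψ]

theorem sum_norm_apply_weightedDelta_sq_le (hψ : ∀ y, 0 < ψ y)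
    (hT : ∀ h, MemFibLp r ψ 2 z h →
      MemCovHp H r ψ 2 M (T h) ∧ covHpNorm r ψ 2 M (T h) ≤ c * fibLpNorm r ψ 2 z h)
    {w : N'} (hw : r w ∈ M) (A : Finset (r ⁻¹' {z})) :
    ∑ s ∈ A, ‖T (weightedDelta ψ s) w‖ ^ 2 ≤ c ^ 2 / ψ w := by
  refine sum_norm_sq_le_of_norm_sum_mul_sq_le A _ (div_nonneg (sq_nonneg c) (hψ w).le) fun a => ?_
  rw [div_mul_eq_mul_div, le_div_iff₀ (hψ w)]
  exact norm_sum_mul_apply_weightedDelta_sq_le hψ hT hw A a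

end Interpolation

theorem squares_of_interpolated_basis_general
    (n : ℕ)
    {N : Type*} [TopologicalSpace N] [ChartedSpace (Fin n → ℂ) N]
    {N' : Type*} [MetricSpace N'] [ChartedSpace (Fin n → ℂ) N']
    (r : N' → N)
    (M : Set N)
    (ψ : N' → ℝ) (hψpos : ∀ y, 0 < ψ y)
    (z : N)
    -- `T` is a bounded linear interpolation operator of norm `c` for `p = 2`
    (T : (N' → ℂ) → (N' → ℂ)) (c : ℝ)
    (hTadd : ∀ h₁ h₂ : N' → ℂ, T (h₁ + h₂) = T h₁ + T h₂)
    (hTsmul : ∀ (a : ℂ) (h : N' → ℂ), T (a • h) = a • T h)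
    (hT : ∀ h : N' → ℂ, MemFibLp r ψ 2 z h →
      MemCovHp (Fin n → ℂ) r ψ 2 M (T h) ∧
      covHpNorm r ψ 2 M (T h) ≤ c * fibLpNorm r ψ 2 z h ∧
      ∀ x ∈ r ⁻¹' {z}, T h x = h x)
    -- `F_{s,z}(w) = ψ(z,s) h_{s,z}(w)²` where `h_{s,z} = T(e_s)`
    (F : r ⁻¹' {z} → N' → ℂ)
    (hF : ∀ (s : r ⁻¹' {z}) (w : N'),
      F s w = (ψ ↑s : ℂ) *
        (T (fun y => if y = ↑s then (((ψ ↑s) ^ (-(1/2) : ℝ) : ℝ) : ℂ) else 0) w) ^ 2) :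
    (∀ s : r ⁻¹' {z}, MemCovHp (Fin n → ℂ) r ψ 1 M (F s)) ∧
    (∀ w ∈ r ⁻¹' M,
      Summable (fun s : r ⁻¹' {z} => ‖F s w‖ / ψ ↑s) ∧
      (∑' s : r ⁻¹' {z}, ‖F s w‖ / ψ ↑s) * ψ w ≤ c ^ 2) := by
  set L : (N' → ℂ) →ₗ[ℂ] (N' → ℂ) := IsLinearMap.mk' T ⟨hTadd, hTsmul⟩
  have hL : ∀ h, MemFibLp r ψ 2 z h →
      MemCovHp _ r ψ 2 M (L h) ∧ covHpNorm r ψ 2 M (L h) ≤ c * fibLpNorm r ψ 2 z h :=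
    fun h hh => ⟨(hT h hh).1, (hT h hh).2.1⟩
  have hF_eq (s : r ⁻¹' {z}) : F s = fun w => (ψ s : ℂ) * L (weightedDelta ψ s) w ^ 2 :=
    funext (hF s)
  have hF_div (s : r ⁻¹' {z}) (w : N') : ‖F s w‖ / ψ s = ‖L (weightedDelta ψ s) w‖ ^ 2 := by
    rw [hF_eq, norm_mul, norm_pow, Complex.norm_real, Real.norm_of_nonneg (hψpos s).le,
      mul_div_cancel_left₀ _ (hψpos s).ne']
  refine ⟨fun s => hF_eq s ▸ (hL _ (memFibLp_two_weightedDelta hψpos s)).1.const_mul_sq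
    (fun y => (hψpos y).le) _, fun w hw => ?_⟩
  have hpartial := sum_norm_apply_weightedDelta_sq_le hψpos hL hw
  have hsummable : Summable fun s : r ⁻¹' {z} => ‖L (weightedDelta ψ s) w‖ ^ 2 :=
    summable_of_sum_le (fun s => by positivity) hpartial
  simp only [hF_div]
  exact ⟨hsummable, (le_div_iff₀ (hψpos w)).1 (hsummable.tsum_le_of_sum_le hpartial)⟩

/-- **Formulas (2.2)–(2.3).** Fix `z ∈ M \ C_M`, let `{e_s}` be the orthonormal basis
of `l_{2,ψ,z}(M')` (`e_s(t) = 0` for `t ≠ s`, `e_s(s) = ψ(s)^{-1/2}`), set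
`h_{s,z} := T_{ψ,z}(e_s)` where `T_{ψ,z}` is a bounded linear interpolation operator
of norm `c` for `p = 2`, and define `F_{s,z}(w) := ψ(s)·h_{s,z}(w)²`.  Then each
`F_{s,z} ∈ H_{1,ψ}(M')`, and `Σ_s (|F_{s,z}(w)|/ψ(s))·ψ(w) ≤ c²` for all `w ∈ M'`. -/
theorem squares_of_interpolated_basis
    (n : ℕ)
    {N : Type*} [TopologicalSpace N] [ChartedSpace (Fin n → ℂ) N]
    {N' : Type*} [MetricSpace N'] [ChartedSpace (Fin n → ℂ) N']
    (r : N' → N) (hr : IsCoveringMap r)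
    (hrholo : MDifferentiable 𝓘(ℂ, Fin n → ℂ) 𝓘(ℂ, Fin n → ℂ) r)
    (M : Set N) (hM : IsStronglyPseudoconvexDomain (Fin n → ℂ) M)
    (ψ : N' → ℝ) (hψpos : ∀ y, 0 < ψ y)
    (hψuc : UniformContinuous fun y => Real.log (ψ y))
    (z : N) (hz : z ∈ M \ varietyUnion (Fin n → ℂ) M)
    -- `T` is a bounded linear interpolation operator of norm `c` for `p = 2`
    (T : (N' → ℂ) → (N' → ℂ)) (c : ℝ) (hc : 0 ≤ c)
    (hTadd : ∀ h₁ h₂ : N' → ℂ, T (h₁ + h₂) = T h₁ + T h₂)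
    (hTsmul : ∀ (a : ℂ) (h : N' → ℂ), T (a • h) = a • T h)
    (hT : ∀ h : N' → ℂ, MemFibLp r ψ 2 z h →
      MemCovHp (Fin n → ℂ) r ψ 2 M (T h) ∧
      covHpNorm r ψ 2 M (T h) ≤ c * fibLpNorm r ψ 2 z h ∧
      ∀ x ∈ r ⁻¹' {z}, T h x = h x)
    -- `F_{s,z}(w) = ψ(z,s) h_{s,z}(w)²` where `h_{s,z} = T(e_s)`
    (F : r ⁻¹' {z} → N' → ℂ)
    (hF : ∀ (s : r ⁻¹' {z}) (w : N'),
      F s w = (ψ ↑s : ℂ) *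
        (T (fun y => if y = ↑s then (((ψ ↑s) ^ (-(1/2) : ℝ) : ℝ) : ℂ) else 0) w) ^ 2) :
    (∀ s : r ⁻¹' {z}, MemCovHp (Fin n → ℂ) r ψ 1 M (F s)) ∧
    (∀ w ∈ r ⁻¹' M,
      Summable (fun s : r ⁻¹' {z} => ‖F s w‖ / ψ ↑s) ∧
      (∑' s : r ⁻¹' {z}, ‖F s w‖ / ψ ↑s) * ψ w ≤ c ^ 2) :=
  squares_of_interpolated_basis_general n r M ψ hψpos z T c hTadd hTsmul hT F hF

end
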